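/- Uniform planner recovers the vanilla DLM ELBO: suppose the planner is uniform over masked positions, i.e., Cat(i; G(z, x)) = 1/N_M(x) for every i with x^i = m and 0 otherwise, independently of z. Then F(x, x_0^i, i) = 1/N_M(x) for every masked i, the term 𝓔_2(x_0) of the planner-aware ELBO vanishes, the reference chain distribution r^G_k(·; x_0) is the uniform distribution on 𝓧_{L-k}(x_0), and the planner-aware lower bound for any sequence x_0 with no masks equals the vanilla masked-diffusion ELBO: log p^{unif}(x_0) ≥ L · E_{k ~ Unif({0,...,L-1})} E_{x_k ~ Unif(𝓧_{L-k}(x_0))}[ Σ_{i : x_k^i = m} (1/(L-k)) · log Cat( x_0^i; D^i(x_k) ) ]. -/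

import Mathlib

open Finset

/-- `Fplan D G x y i = E_{z ~ D(x)}[ Cat(i ; G(z^{-i,y}, x)) ]`, the coordinates of `z`
being sampled independently, `z^j ~ D^j(x)`. -/
noncomputable def Fplan {V : Type*} [Fintype V] [DecidableEq V] {L : ℕ}
    (D : (Fin L → V) → Fin L → V → ℝ)
    (G : (Fin L → V) → (Fin L → V) → Fin L → ℝ)
    (x : Fin L → V) (y : V) (i : Fin L) : ℝ :=
  ∑ z : Fin L → V, (∏ j, D x j (z j)) * G (Function.update z i y) x i

/-- One step of planner-guided sampling. -/
noncomputable def stepKernel {V : Type*} [Fintype V] [DecidableEq V] {L : ℕ}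
    (D : (Fin L → V) → Fin L → V → ℝ)
    (G : (Fin L → V) → (Fin L → V) → Fin L → ℝ)
    (x w : Fin L → V) : ℝ :=
  ∑ z : Fin L → V, (∏ j, D x j (z j)) *
    ∑ i ∈ Finset.univ.filter (fun i : Fin L => Function.update x i (z i) = w), G z x i

/-- The distribution of the state after `k` steps of planner-guided sampling,
starting from the fully masked sequence; `sampleDist D G mask L` is `p^G`. -/
noncomputable def sampleDist {V : Type*} [Fintype V] [DecidableEq V] {L : ℕ}
    (D : (Fin L → V) → Fin L → V → ℝ)
    (G : (Fin L → V) → (Fin L → V) → Fin L → ℝ)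
    (mask : V) : ℕ → (Fin L → V) → ℝ
  | 0, w => if w = (fun _ => mask) then (1 : ℝ) else 0
  | k + 1, w => ∑ x : Fin L → V, sampleDist D G mask k x * stepKernel D G x w

/-- The step-`k` law `r^G_k(·; x₀)` of the reference chain `Y^{x₀}` driven by the
planner `G(x₀, ·)`. -/
noncomputable def refDist {V : Type*} [Fintype V] [DecidableEq V] {L : ℕ}
    (G : (Fin L → V) → (Fin L → V) → Fin L → ℝ)
    (mask : V) (x0 : Fin L → V) : ℕ → (Fin L → V) → ℝ
  | 0, w => if w = (fun _ => mask) then (1 : ℝ) else 0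
  | k + 1, w => ∑ x : Fin L → V,
      refDist G mask x0 k x *
        ∑ i ∈ Finset.univ.filter
            (fun i : Fin L => x i = mask ∧ Function.update x i (x0 i) = w),
          G x0 x i

/-- `N_M(x)`: the number of masked coordinates of `x`. -/
def NMask {V : Type*} [Fintype V] [DecidableEq V] {L : ℕ}
    (mask : V) (x : Fin L → V) : ℕ :=
  (Finset.univ.filter (fun i : Fin L => x i = mask)).card

/-- `𝓧_j(x₀)`: the set of sequences equal to `x₀` except that exactly `j` coordinates
are replaced by the mask symbol. -/
def XSet {V : Type*} [Fintype V] [DecidableEq V] {L : ℕ}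
    (mask : V) (x0 : Fin L → V) (j : ℕ) : Finset (Fin L → V) :=
  Finset.univ.filter (fun x : Fin L → V =>
    (∀ i, x i = x0 i ∨ x i = mask) ∧ NMask mask x = j)

/-!
Under the uniform planner `G(z, x)` does not depend on `z`, so the average over `z` in `F` gives
back `G`: `F(x, x₀^i, i) = G(x₀, x)_i` and every log-ratio in `𝓔₂` is `log 1`.

The combinatorial core is double counting of the pairs (sequence, masked position): unmasking a
uniformly chosen masked position of a uniform element of `𝓧_{j+1}(x₀)` gives a uniform element of
`𝓧_j(x₀)`. Since the reference chain does exactly this, its `k`-th law is uniform on `𝓧_{L-k}(x₀)`.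

For the bound, `p(x₀)` is the probability of reaching `x₀` from the fully masked sequence. One
step of the recursion for this probability averages, over the uniformly chosen masked position
`i`, a sum over the revealed symbol `y`; keeping only `y = x₀^i` and applying Jensen's inequality
for `exp` to the average over `i` bounds it from below by the exponential of the expected
log-likelihood along the reference chain. By the uniformity of the marginals of that chain, the
expected log-likelihood is the vanilla ELBO.
-/

lemma sum_range_sub_eq_sum_range_succ {M : Type*} [AddCommMonoid M] (f : ℕ → M) (n : ℕ) :
    ∑ k ∈ range n, f (n - k) = ∑ k ∈ range n, f (k + 1) := by
  rw [← sum_range_reflect (fun k => f (k + 1))]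
  exact sum_congr rfl fun k hk => congrArg f (by have := mem_range.1 hk; omega)

section ProductWeights

variable {ι V : Type*} [Fintype ι] [DecidableEq ι] [Fintype V]

lemma sum_prod_eq_one (p : ι → V → ℝ) (hp : ∀ j, ∑ y, p j y = 1) :
    ∑ z : ι → V, ∏ j, p j (z j) = 1 := by
  simp [← Fintype.prod_sum, hp]

lemma sum_prod_mul_apply (p : ι → V → ℝ) (hp : ∀ j, ∑ y, p j y = 1) (i : ι) (f : V → ℝ) :
    ∑ z : ι → V, (∏ j, p j (z j)) * f (z i) = ∑ y, p i y * f y := by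
  have hprod : ∀ z : ι → V, (∏ j, p j (z j)) * f (z i)
      = ∏ j, p j (z j) * (if j = i then f (z j) else 1) := fun z => by
    rw [prod_mul_distrib, prod_ite_eq', if_pos (mem_univ i)]
  simp_rw [hprod, ← Fintype.prod_sum (fun j y => p j y * if j = i then f y else 1)]
  rw [prod_eq_single i (fun j _ hj => by simp [hj, hp]) (by simp)]
  simp

end ProductWeights

lemma Fplan_eq_of_indep {V : Type*} [Fintype V] [DecidableEq V] {L : ℕ}
    {D : (Fin L → V) → Fin L → V → ℝ} {G : (Fin L → V) → (Fin L → V) → Fin L → ℝ}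
    (hD1 : ∀ x i, ∑ y, D x i y = 1) (hG : ∀ z z', G z = G z')
    (x z : Fin L → V) (y : V) (i : Fin L) :
    Fplan D G x y i = G z x i := by
  simp only [Fplan, hG _ z, ← sum_mul, sum_prod_eq_one _ (hD1 x), one_mul]

section Masking

variable {V : Type*} [Fintype V] [DecidableEq V] {L : ℕ} {mask : V} {x0 : Fin L → V}

@[simp]
lemma mem_XSet {x : Fin L → V} {j : ℕ} :
    x ∈ XSet mask x0 j ↔ (∀ i, x i = x0 i ∨ x i = mask) ∧ NMask mask x = j := by
  simp [XSet]

lemma NMask_update_mask {w : Fin L → V} {i : Fin L} (hi : w i ≠ mask) :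
    NMask mask (Function.update w i mask) = NMask mask w + 1 := by
  have : univ.filter (fun j => Function.update w i mask j = mask)
      = insert i (univ.filter fun j => w j = mask) := by
    ext j
    rcases eq_or_ne j i with rfl | hj <;> simp [*]
  rw [NMask, this, card_insert_of_notMem (by simp [hi]), NMask]

lemma update_mask_mem_XSet {w : Fin L → V} {j : ℕ} (hw : w ∈ XSet mask x0 j)
    {i : Fin L} (hi : w i ≠ mask) : Function.update w i mask ∈ XSet mask x0 (j + 1) := by
  rw [mem_XSet] at hw ⊢
  refine ⟨fun k => ?_, by rw [NMask_update_mask hi, hw.2]⟩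
  rcases eq_or_ne k i with rfl | hk
  · simp
  · simpa [hk] using hw.1 k

lemma update_unmask_mem_XSet (hx0 : ∀ i, x0 i ≠ mask) {x : Fin L → V} {j : ℕ}
    (hx : x ∈ XSet mask x0 (j + 1)) {i : Fin L} (hi : x i = mask) :
    Function.update x i (x0 i) ∈ XSet mask x0 j := by
  rw [mem_XSet] at hx ⊢
  refine ⟨fun k => ?_, ?_⟩
  · rcases eq_or_ne k i with rfl | hk
    · simp
    · simpa [hk] using hx.1 k
  · have hmask := NMask_update_mask (mask := mask) (w := Function.update x i (x0 i)) (i := i)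
      (by simpa using hx0 i)
    rw [Function.update_idem, Function.update_eq_self_iff.2 hi.symm, hx.2] at hmask
    omega

lemma eq_of_mem_XSet_zero {x : Fin L → V} (hx : x ∈ XSet mask x0 0) : x = x0 := by
  rw [mem_XSet, NMask, card_eq_zero, filter_eq_empty_iff] at hx
  exact funext fun i => (hx.1 i).resolve_right (hx.2 (mem_univ i))

lemma XSet_length : XSet mask x0 L = {fun _ => mask} := by
  ext x
  have hcard : NMask mask x = L ↔ ∀ i, x i = mask := by
    simpa [NMask] using card_filter_eq_iff (s := univ) (p := fun i => x i = mask)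
  rw [mem_XSet, mem_singleton, hcard, funext_iff]
  exact ⟨fun h => h.2, fun h => ⟨fun i => Or.inr (h i), h⟩⟩

lemma card_unmasked_of_mem_XSet {w : Fin L → V} {j : ℕ} (hw : w ∈ XSet mask x0 j) :
    #(univ.filter fun i => w i ≠ mask) = L - j := by
  have := card_filter_add_card_filter_not (s := univ) (fun i : Fin L => w i = mask)
  rw [mem_XSet, NMask] at hw
  simp only [card_univ, Fintype.card_fin, hw.2] at this
  simp only [ne_eq]
  omega

lemma sum_mem_XSet_succ_sum_unmask (hx0 : ∀ i, x0 i ≠ mask) (j : ℕ) (f : (Fin L → V) → ℝ) :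
    ∑ x ∈ XSet mask x0 (j + 1), ∑ i ∈ univ.filter (fun i => x i = mask),
        f (Function.update x i (x0 i))
      = ((L - j : ℕ) : ℝ) * ∑ w ∈ XSet mask x0 j, f w := by
  have hfix : ∀ i, ∑ x ∈ (XSet mask x0 (j + 1)).filter (fun x => x i = mask),
        f (Function.update x i (x0 i))
      = ∑ w ∈ (XSet mask x0 j).filter (fun w => w i ≠ mask), f w := by
    intro i
    refine sum_nbij' (fun x => Function.update x i (x0 i)) (fun w => Function.update w i mask)
      ?_ ?_ ?_ ?_ (fun _ _ => rfl)
    · intro x hx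
      rw [mem_filter] at hx ⊢
      exact ⟨update_unmask_mem_XSet hx0 hx.1 hx.2, by simpa using hx0 i⟩
    · intro w hw
      rw [mem_filter] at hw ⊢
      exact ⟨update_mask_mem_XSet hw.1 hw.2, by simp⟩
    · intro x hx
      rw [mem_filter] at hx
      simp [← hx.2]
    · intro w hw
      rw [mem_filter, mem_XSet] at hw
      simp [← (hw.1.1 i).resolve_right hw.2]
  calc ∑ x ∈ XSet mask x0 (j + 1), ∑ i ∈ univ.filter (fun i => x i = mask),
        f (Function.update x i (x0 i))
      = ∑ i, ∑ w ∈ (XSet mask x0 j).filter (fun w => w i ≠ mask), f w := by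
        simp_rw [sum_filter]
        rw [sum_comm]
        simp_rw [← sum_filter, hfix]
    _ = ∑ w ∈ XSet mask x0 j, ((L - j : ℕ) : ℝ) * f w := by
        simp_rw [sum_filter]
        rw [sum_comm]
        refine sum_congr rfl fun w hw => ?_
        rw [← sum_filter, sum_const, card_unmasked_of_mem_XSet hw, nsmul_eq_mul]
    _ = ((L - j : ℕ) : ℝ) * ∑ w ∈ XSet mask x0 j, f w := (mul_sum ..).symm

lemma card_XSet_succ_mul (hx0 : ∀ i, x0 i ≠ mask) (j : ℕ) :
    ((XSet mask x0 (j + 1)).card : ℝ) * ((j + 1 : ℕ) : ℝ)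
      = ((L - j : ℕ) : ℝ) * (XSet mask x0 j).card := by
  have h := sum_mem_XSet_succ_sum_unmask hx0 j (fun _ => (1 : ℝ))
  simp only [sum_const, nsmul_eq_mul, mul_one] at h
  rw [← h, sum_congr rfl fun x hx => by rw [← NMask, (mem_XSet.1 hx).2], sum_const,
    nsmul_eq_mul]

end Masking

section UniformAverage

variable {V : Type*} [Fintype V] [DecidableEq V] {L : ℕ} {mask : V} {x0 : Fin L → V}

noncomputable def unifAvg (mask : V) (x0 : Fin L → V) (j : ℕ) (f : (Fin L → V) → ℝ) : ℝ :=
  ((XSet mask x0 j).card : ℝ)⁻¹ * ∑ x ∈ XSet mask x0 j, f x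

lemma unifAvg_congr {j : ℕ} {f g : (Fin L → V) → ℝ} (h : ∀ x ∈ XSet mask x0 j, f x = g x) :
    unifAvg mask x0 j f = unifAvg mask x0 j g := by
  rw [unifAvg, unifAvg, sum_congr rfl h]

lemma unifAvg_add (j : ℕ) (f g : (Fin L → V) → ℝ) :
    unifAvg mask x0 j (fun x => f x + g x) = unifAvg mask x0 j f + unifAvg mask x0 j g := by
  simp only [unifAvg, sum_add_distrib, mul_add]

lemma sum_ite_mem_XSet_mul (j : ℕ) (f : (Fin L → V) → ℝ) :
    ∑ x, (if x ∈ XSet mask x0 j then ((XSet mask x0 j).card : ℝ)⁻¹ else 0) * f x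
      = unifAvg mask x0 j f := by
  simp only [ite_mul, zero_mul, sum_ite_mem, univ_inter, unifAvg, mul_sum]

lemma unifAvg_indicator (j : ℕ) (w : Fin L → V) :
    unifAvg mask x0 j (fun x => if x = w then 1 else 0)
      = if w ∈ XSet mask x0 j then ((XSet mask x0 j).card : ℝ)⁻¹ else 0 := by
  simp [unifAvg, sum_ite_eq']

lemma unifAvg_succ_unmask (hx0 : ∀ i, x0 i ≠ mask) {j : ℕ} (hj : j < L)
    (f : (Fin L → V) → ℝ) :
    unifAvg mask x0 (j + 1) (fun x => ((j + 1 : ℕ) : ℝ)⁻¹ *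
        ∑ i ∈ univ.filter (fun i => x i = mask), f (Function.update x i (x0 i)))
      = unifAvg mask x0 j f := by
  have hLj : ((L - j : ℕ) : ℝ) ≠ 0 := Nat.cast_ne_zero.2 (by omega)
  rw [unifAvg, unifAvg, ← mul_sum, sum_mem_XSet_succ_sum_unmask hx0, ← mul_assoc, ← mul_inv,
    card_XSet_succ_mul hx0, mul_inv, mul_mul_mul_comm, inv_mul_cancel₀ hLj, one_mul]

end UniformAverage

section ReferenceChain

variable {V : Type*} [Fintype V] [DecidableEq V] {L : ℕ} {mask : V} {x0 : Fin L → V}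
  {G : (Fin L → V) → (Fin L → V) → Fin L → ℝ}

lemma refDist_eq_of_uniform
    (hG : ∀ z x i, G z x i = if x i = mask then ((NMask mask x : ℝ))⁻¹ else 0)
    (hx0 : ∀ i, x0 i ≠ mask) {k : ℕ} (hk : k ≤ L) (w : Fin L → V) :
    refDist G mask x0 k w =
      if w ∈ XSet mask x0 (L - k) then ((XSet mask x0 (L - k)).card : ℝ)⁻¹ else 0 := by
  induction k generalizing w with
  | zero => simp [refDist, XSet_length]
  | succ k ih =>
    obtain ⟨j, hj, hjk⟩ : ∃ j, L - k = j + 1 ∧ L - (k + 1) = j := ⟨L - (k + 1), by omega, rfl⟩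
    have hstep : ∀ x ∈ XSet mask x0 (j + 1),
        ∑ i ∈ univ.filter (fun i => x i = mask ∧ Function.update x i (x0 i) = w), G x0 x i
          = ((j + 1 : ℕ) : ℝ)⁻¹ * ∑ i ∈ univ.filter (fun i => x i = mask),
              if Function.update x i (x0 i) = w then 1 else 0 := by
      intro x hx
      rw [mul_sum, ← filter_filter, sum_filter]
      refine sum_congr rfl fun i hi => ?_
      rw [hG, if_pos (mem_filter.1 hi).2, (mem_XSet.1 hx).2]
      split_ifs <;> simp
    calc refDist G mask x0 (k + 1) w
        = ∑ x, refDist G mask x0 k x *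
            ∑ i ∈ univ.filter (fun i => x i = mask ∧ Function.update x i (x0 i) = w),
              G x0 x i := rfl
      _ = unifAvg mask x0 (j + 1) (fun x =>
            ∑ i ∈ univ.filter (fun i => x i = mask ∧ Function.update x i (x0 i) = w),
              G x0 x i) := by
          simp_rw [ih (by omega), hj]
          exact sum_ite_mem_XSet_mul _ _
      _ = unifAvg mask x0 j (fun x => if x = w then 1 else 0) := by
          rw [unifAvg_congr hstep]
          exact unifAvg_succ_unmask hx0 (by omega) (fun y => if y = w then 1 else 0)
      _ = _ := by rw [unifAvg_indicator, hjk]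

end ReferenceChain

section Sampling

variable {V : Type*} [Fintype V] [DecidableEq V] {L : ℕ} {mask : V}
  {D : (Fin L → V) → Fin L → V → ℝ} {G : (Fin L → V) → (Fin L → V) → Fin L → ℝ}
  {x0 : Fin L → V}

variable (D G x0) in
noncomputable def hitProb : ℕ → (Fin L → V) → ℝ
  | 0, x => if x = x0 then 1 else 0
  | j + 1, x => ∑ w, stepKernel D G x w * hitProb j w

lemma sum_sampleDist_mul_hitProb (k j : ℕ) :
    ∑ x, sampleDist D G mask k x * hitProb D G x0 j x
      = hitProb D G x0 (k + j) (fun _ => mask) := by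
  induction k generalizing j with
  | zero => simp [sampleDist]
  | succ k ih =>
    simp only [sampleDist, sum_mul]
    rw [sum_comm, Nat.add_right_comm, Nat.add_assoc, ← ih (j + 1)]
    refine sum_congr rfl fun y _ => ?_
    simp only [hitProb, mul_sum, mul_assoc]

lemma sampleDist_eq_hitProb (k : ℕ) :
    sampleDist D G mask k x0 = hitProb D G x0 k (fun _ => mask) := by
  simpa [hitProb] using sum_sampleDist_mul_hitProb (D := D) (G := G) (mask := mask) (x0 := x0) k 0

lemma sum_stepKernel_mul (x : Fin L → V) (C : (Fin L → V) → ℝ) :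
    ∑ w, stepKernel D G x w * C w
      = ∑ z : Fin L → V, (∏ j, D x j (z j)) * ∑ i, G z x i * C (Function.update x i (z i)) := by
  simp only [stepKernel, sum_mul]
  rw [sum_comm]
  refine sum_congr rfl fun z _ => ?_
  rw [← sum_fiberwise univ (fun i => Function.update x i (z i)), mul_sum]
  refine sum_congr rfl fun w _ => ?_
  rw [mul_assoc, sum_mul]
  congr 1
  exact sum_congr rfl fun i hi => by rw [(mem_filter.1 hi).2]

lemma stepKernel_nonneg (hD0 : ∀ x i y, 0 ≤ D x i y) (hG0 : ∀ z x i, 0 ≤ G z x i)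
    (x w : Fin L → V) : 0 ≤ stepKernel D G x w :=
  sum_nonneg fun _ _ => mul_nonneg (prod_nonneg fun _ _ => hD0 ..) (sum_nonneg fun _ _ => hG0 ..)

lemma hitProb_nonneg (hD0 : ∀ x i y, 0 ≤ D x i y) (hG0 : ∀ z x i, 0 ≤ G z x i)
    (j : ℕ) (x : Fin L → V) : 0 ≤ hitProb D G x0 j x := by
  induction j generalizing x with
  | zero => unfold hitProb; positivity
  | succ j ih => exact sum_nonneg fun w _ => mul_nonneg (stepKernel_nonneg hD0 hG0 x w) (ih w)

lemma sum_stepKernel_mul_of_uniform (hD1 : ∀ x i, ∑ y, D x i y = 1)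
    (hG : ∀ z x i, G z x i = if x i = mask then ((NMask mask x : ℝ))⁻¹ else 0)
    (x : Fin L → V) (C : (Fin L → V) → ℝ) :
    ∑ w, stepKernel D G x w * C w
      = ∑ i ∈ univ.filter (fun i => x i = mask),
          ((NMask mask x : ℝ))⁻¹ * ∑ y, D x i y * C (Function.update x i y) := by
  have hplan : ∀ z : Fin L → V, ∑ i, G z x i * C (Function.update x i (z i))
      = ∑ i ∈ univ.filter (fun i => x i = mask),
          ((NMask mask x : ℝ))⁻¹ * C (Function.update x i (z i)) := fun z => by
    rw [sum_filter]
    exact sum_congr rfl fun i _ => by rw [hG]; split_ifs <;> simp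
  simp_rw [sum_stepKernel_mul, hplan, mul_sum]
  rw [sum_comm]
  refine sum_congr rfl fun i _ => ?_
  rw [← mul_sum, ← sum_prod_mul_apply (D x) (hD1 x) i (fun y => C (Function.update x i y)),
    mul_sum]
  exact sum_congr rfl fun z _ => by ring

end Sampling

section Elbo

variable {V : Type*} [Fintype V] [DecidableEq V] {L : ℕ}
  {D : (Fin L → V) → Fin L → V → ℝ} {G : (Fin L → V) → (Fin L → V) → Fin L → ℝ}
  {mask : V} {x0 : Fin L → V}

variable (D mask x0) in
noncomputable def elboFrom : ℕ → (Fin L → V) → ℝ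
  | 0, _ => 0
  | j + 1, x => ∑ i ∈ univ.filter (fun i => x i = mask), ((j + 1 : ℕ) : ℝ)⁻¹ *
      (Real.log (D x i (x0 i)) + elboFrom j (Function.update x i (x0 i)))

lemma exp_elboFrom_le_hitProb (hD0 : ∀ x i y, 0 ≤ D x i y) (hD1 : ∀ x i, ∑ y, D x i y = 1)
    (hG : ∀ z x i, G z x i = if x i = mask then ((NMask mask x : ℝ))⁻¹ else 0)
    (hx0 : ∀ i, x0 i ≠ mask)
    (hDpos : ∀ x : Fin L → V, (∀ i', x i' = x0 i' ∨ x i' = mask) →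
      ∀ i, x i = mask → 0 < D x i (x0 i))
    {j : ℕ} {x : Fin L → V} (hx : x ∈ XSet mask x0 j) :
    Real.exp (elboFrom D mask x0 j x) ≤ hitProb D G x0 j x := by
  have hG0 : ∀ z x i, 0 ≤ G z x i := fun z x i => by rw [hG]; split_ifs <;> positivity
  induction j generalizing x with
  | zero => simp [elboFrom, hitProb, eq_of_mem_XSet_zero hx]
  | succ j ih =>
    set s := univ.filter (fun i => x i = mask)
    set c : ℝ := ((j + 1 : ℕ) : ℝ)⁻¹
    have hcard : (NMask mask x : ℝ) = (j + 1 : ℕ) := by rw [(mem_XSet.1 hx).2]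
    have hweights : ∑ _i ∈ s, c = 1 := by
      rw [sum_const, nsmul_eq_mul, ← NMask, hcard, mul_inv_cancel₀ (by positivity)]
    calc Real.exp (elboFrom D mask x0 (j + 1) x)
        = Real.exp (∑ i ∈ s, c • (Real.log (D x i (x0 i))
            + elboFrom D mask x0 j (Function.update x i (x0 i)))) := rfl
      _ ≤ ∑ i ∈ s, c • Real.exp (Real.log (D x i (x0 i))
            + elboFrom D mask x0 j (Function.update x i (x0 i))) :=
          convexOn_exp.map_sum_le (fun _ _ => by positivity) hweights (fun _ _ => trivial)
      _ = ∑ i ∈ s, c * (D x i (x0 i)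
            * Real.exp (elboFrom D mask x0 j (Function.update x i (x0 i)))) := by
          refine sum_congr rfl fun i hi => ?_
          rw [smul_eq_mul, Real.exp_add,
            Real.exp_log (hDpos x (mem_XSet.1 hx).1 i (mem_filter.1 hi).2)]
      _ ≤ ∑ i ∈ s, c * (D x i (x0 i) * hitProb D G x0 j (Function.update x i (x0 i))) := by
          gcongr with i hi
          · exact hD0 ..
          · exact ih (update_unmask_mem_XSet hx0 hx (mem_filter.1 hi).2)
      _ ≤ ∑ i ∈ s, c * ∑ y, D x i y * hitProb D G x0 j (Function.update x i y) := by
          gcongr with i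
          exact single_le_sum (fun y _ => mul_nonneg (hD0 x i y) (hitProb_nonneg hD0 hG0 j _))
            (mem_univ _)
      _ = hitProb D G x0 (j + 1) x := by
          rw [hitProb, sum_stepKernel_mul_of_uniform hD1 hG, hcard]

lemma unifAvg_elboFrom (hx0 : ∀ i, x0 i ≠ mask) {j : ℕ} (hj : j ≤ L) :
    unifAvg mask x0 j (elboFrom D mask x0 j)
      = ∑ n ∈ range j, unifAvg mask x0 (n + 1) (fun x =>
          ∑ i ∈ univ.filter (fun i => x i = mask),
            ((n + 1 : ℕ) : ℝ)⁻¹ * Real.log (D x i (x0 i))) := by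
  induction j with
  | zero => simp [unifAvg, elboFrom]
  | succ j ih =>
    have hsplit : elboFrom D mask x0 (j + 1) = fun x =>
        ∑ i ∈ univ.filter (fun i => x i = mask), ((j + 1 : ℕ) : ℝ)⁻¹ * Real.log (D x i (x0 i))
          + ((j + 1 : ℕ) : ℝ)⁻¹ * ∑ i ∈ univ.filter (fun i => x i = mask),
              elboFrom D mask x0 j (Function.update x i (x0 i)) := by
      funext x
      simp only [elboFrom, mul_add, sum_add_distrib, mul_sum]
    rw [hsplit, unifAvg_add, unifAvg_succ_unmask hx0 hj, ih (by omega), sum_range_succ,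
      add_comm]

lemma vanillaElbo_le_log_sampleDist (hD0 : ∀ x i y, 0 ≤ D x i y)
    (hD1 : ∀ x i, ∑ y, D x i y = 1)
    (hG : ∀ z x i, G z x i = if x i = mask then ((NMask mask x : ℝ))⁻¹ else 0)
    (hx0 : ∀ i, x0 i ≠ mask)
    (hDpos : ∀ x : Fin L → V, (∀ i', x i' = x0 i' ∨ x i' = mask) →
      ∀ i, x i = mask → 0 < D x i (x0 i)) :
    ∑ k ∈ range L, unifAvg mask x0 (L - k) (fun x =>
        ∑ i ∈ univ.filter (fun i => x i = mask), ((L - k : ℕ) : ℝ)⁻¹ * Real.log (D x i (x0 i)))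
      ≤ Real.log (sampleDist D G mask L x0) := by
  have hmask : (fun _ => mask) ∈ XSet mask x0 L := by
    rw [XSet_length]
    exact mem_singleton_self _
  have hbound := exp_elboFrom_le_hitProb hD0 hD1 hG hx0 hDpos hmask
  calc _ = ∑ n ∈ range L, unifAvg mask x0 (n + 1) (fun x =>
            ∑ i ∈ univ.filter (fun i => x i = mask),
              ((n + 1 : ℕ) : ℝ)⁻¹ * Real.log (D x i (x0 i))) :=
        sum_range_sub_eq_sum_range_succ (fun n => unifAvg mask x0 n (fun x =>
          ∑ i ∈ univ.filter (fun i => x i = mask), (n : ℝ)⁻¹ * Real.log (D x i (x0 i)))) L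
    _ = elboFrom D mask x0 L (fun _ => mask) := by
        rw [← unifAvg_elboFrom hx0 le_rfl]
        simp [unifAvg, XSet_length]
    _ ≤ Real.log (hitProb D G x0 L (fun _ => mask)) :=
        (Real.le_log_iff_exp_le ((Real.exp_pos _).trans_le hbound)).2 hbound
    _ = Real.log (sampleDist D G mask L x0) := by rw [sampleDist_eq_hitProb]

end Elbo

/-- **The uniform planner recovers the vanilla DLM ELBO.**  If the planner is uniform
over the masked positions, then (1) `F(x, x₀^i, i) = 1/N_M(x)` for every masked `i`;
(2) the correction term `𝓔₂(x₀)` of the planner-aware ELBO vanishes; (3) the reference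
chain law `r^G_k(·; x₀)` is the uniform distribution on `𝓧_{L-k}(x₀)`; and (4) the
planner-aware lower bound for a mask-free `x₀` equals the vanilla masked-diffusion ELBO. -/
theorem uniform_planner_recovers_vanilla_elbo
    {V : Type*} [Fintype V] [DecidableEq V] {L : ℕ}
    (mask : V)
    (D : (Fin L → V) → Fin L → V → ℝ)
    (G : (Fin L → V) → (Fin L → V) → Fin L → ℝ)
    (hD0 : ∀ x i y, 0 ≤ D x i y) (hD1 : ∀ x i, ∑ y, D x i y = 1)
    (hG : ∀ z x i, G z x i = if x i = mask then ((NMask mask x : ℝ))⁻¹ else 0)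
    (x0 : Fin L → V) (hx0 : ∀ i, x0 i ≠ mask)
    (hDpos : ∀ x : Fin L → V, (∀ i', x i' = x0 i' ∨ x i' = mask) →
      ∀ i, x i = mask → 0 < D x i (x0 i)) :
    (∀ (x : Fin L → V) (i : Fin L), x i = mask →
        Fplan D G x (x0 i) i = ((NMask mask x : ℝ))⁻¹) ∧
    (-((L : ℝ) * ((L : ℝ)⁻¹ * ∑ k ∈ Finset.range L, ∑ x : Fin L → V,
        refDist G mask x0 k x *
          ∑ i ∈ Finset.univ.filter (fun i : Fin L => x i = mask),
            G x0 x i * Real.log (G x0 x i / Fplan D G x (x0 i) i))) = 0) ∧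
    (∀ k, k ≤ L → ∀ x : Fin L → V,
        refDist G mask x0 k x =
          if x ∈ XSet mask x0 (L - k) then ((XSet mask x0 (L - k)).card : ℝ)⁻¹ else 0) ∧
    (Real.log (sampleDist D G mask L x0)
      ≥ (L : ℝ) * ((L : ℝ)⁻¹ * ∑ k ∈ Finset.range L,
          ((XSet mask x0 (L - k)).card : ℝ)⁻¹ *
            ∑ x ∈ XSet mask x0 (L - k),
              ∑ i ∈ Finset.univ.filter (fun i : Fin L => x i = mask),
                ((L - k : ℕ) : ℝ)⁻¹ * Real.log (D x i (x0 i)))) := by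
  have hF : ∀ x i, Fplan D G x (x0 i) i = G x0 x i := fun x i =>
    Fplan_eq_of_indep hD1 (fun z z' => funext₂ fun x i => by rw [hG, hG]) x x0 _ i
  refine ⟨fun x i hi => by rw [hF, hG, if_pos hi], ?_,
    fun k hk x => refDist_eq_of_uniform hG hx0 hk x, ?_⟩
  · have hterm : ∀ x i, G x0 x i * Real.log (G x0 x i / Fplan D G x (x0 i) i) = 0 := by
      intro x i
      rw [hF]
      rcases eq_or_ne (G x0 x i) 0 with h | h <;> simp [h]
    simp [hterm]
  · rw [ge_iff_le]
    calc _ = ∑ k ∈ range L, unifAvg mask x0 (L - k) (fun x =>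
              ∑ i ∈ univ.filter (fun i => x i = mask),
                ((L - k : ℕ) : ℝ)⁻¹ * Real.log (D x i (x0 i))) := by
          rcases eq_or_ne L 0 with rfl | hL
          · simp
          · exact mul_inv_cancel_left₀ (Nat.cast_ne_zero.2 hL) _
      _ ≤ _ := vanillaElbo_le_log_sampleDist hD0 hD1 hG hx0 hDpos
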